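/- arXiv:0807.1023 — 4 statements merged into one kernel-verified Lean document; each statement's English description precedes it below -/
import Mathlib

section
/- Let A be a ring, h a central element of A, and J a two-sided ideal of A. Assume that ab − ba ∈ hA for all a, b ∈ A and that xy − yx ∈ hJ for all x, y ∈ J. Then for all integers i, j ≥ 0 with i + j ≥ 1 and all x ∈ J^i, y ∈ J^j one has xy − yx ∈ h·J^{i+j−1} (with the convention J^0 = A). -/
open scoped Pointwise

/-!
Write `⁅x, y⁆ = x * y - y * x`. The bracket is biadditive and satisfies
`⁅u * v, y⁆ = u * ⁅v, y⁆ + ⁅u, y⁆ * v` and `⁅x, u * v⁆ = ⁅x, u⁆ * v + u * ⁅x, v⁆`, while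
centrality of `h` gives `a * (h * z) = h * (a * z)`; so it suffices to treat products `u * v`
with `u ∈ J`. Induction on `j` with the second identity gives `⁅J, J ^ j⁆ ⊆ h J ^ j`, then
induction on `i` with the first gives `⁅J ^ (i + 1), J ^ j⁆ ⊆ h J ^ (i + j)`, and the case `i = 0`
follows by antisymmetry.
-/

section PowSet

variable {A : Type*} [Ring A]

/-- The `n`-th power of a (two-sided) ideal `J` of a ring `A`, with the convention `J ^ 0 = A`,
realized as an additive subgroup of `A`. -/
def powSet (J : Ideal A) : ℕ → AddSubgroup A
  | 0 => ⊤
  | 1 => J.toAddSubgroup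
  | n + 2 => AddSubgroup.closure ((J : Set A) * (powSet J (n + 1) : Set A))

theorem powSet_succ_succ (J : Ideal A) (n : ℕ) :
    powSet J (n + 2) = AddSubgroup.closure ((J : Set A) * (powSet J (n + 1) : Set A)) := rfl

theorem powSet_mul_mem_left (J : Ideal A) :
    ∀ (n : ℕ) (a : A) {x : A}, x ∈ powSet J n → a * x ∈ powSet J n
  | 0, a, x, _ => AddSubgroup.mem_top _
  | 1, a, x, hx => J.mul_mem_left a hx
  | n + 2, a, x, hx => by
    induction hx using AddSubgroup.closure_induction with
    | mem z hz =>
      obtain ⟨u, hu, v, hv, rfl⟩ := hz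
      exact AddSubgroup.subset_closure
        ⟨a * u, J.mul_mem_left a hu, v, hv, mul_assoc a u v⟩
    | zero => simpa using (powSet J (n + 2)).zero_mem
    | add x y hx hy ihx ihy => simpa [mul_add] using add_mem ihx ihy
    | neg x hx ihx => simpa [mul_neg] using neg_mem ihx

theorem powSet_mul_mem_right (J : Ideal A) (hJ : ∀ x ∈ J, ∀ a : A, x * a ∈ J) :
    ∀ (n : ℕ) (a : A) {x : A}, x ∈ powSet J n → x * a ∈ powSet J n
  | 0, a, x, _ => AddSubgroup.mem_top _
  | 1, a, x, hx => hJ x hx a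
  | n + 2, a, x, hx => by
    induction hx using AddSubgroup.closure_induction with
    | mem z hz =>
      obtain ⟨u, hu, v, hv, rfl⟩ := hz
      exact AddSubgroup.subset_closure
        ⟨u, hu, v * a, powSet_mul_mem_right J hJ (n + 1) a hv, (mul_assoc u v a).symm⟩
    | zero => simpa using (powSet J (n + 2)).zero_mem
    | add x y hx hy ihx ihy => simpa [add_mul] using add_mem ihx ihy
    | neg x hx ihx => simpa [neg_mul] using neg_mem ihx

theorem powSet_mul_mem (J : Ideal A) (hJ : ∀ x ∈ J, ∀ a : A, x * a ∈ J) :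
    ∀ (i j : ℕ) {x y : A}, x ∈ powSet J i → y ∈ powSet J j → x * y ∈ powSet J (i + j)
  | 0, j, x, y, _, hy => by simpa using powSet_mul_mem_left J j x hy
  | 1, 0, x, y, hx, _ => by simpa using powSet_mul_mem_right J hJ 1 y hx
  | 1, j + 1, x, y, hx, hy => by
    rw [show 1 + (j + 1) = j + 2 from by omega, powSet_succ_succ]
    exact AddSubgroup.subset_closure ⟨x, hx, y, hy, rfl⟩
  | i + 2, j, x, y, hx, hy => by
    rw [show i + 2 + j = (i + j) + 2 from by omega, powSet_succ_succ]
    induction hx using AddSubgroup.closure_induction with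
    | mem z hz =>
      obtain ⟨u, hu, v, hv, rfl⟩ := hz
      have hvy : v * y ∈ powSet J (i + 1 + j) := powSet_mul_mem J hJ (i + 1) j hv hy
      rw [show i + 1 + j = i + j + 1 from by omega] at hvy
      exact AddSubgroup.subset_closure ⟨u, hu, v * y, hvy, (mul_assoc u v y).symm⟩
    | zero =>
      simpa using (AddSubgroup.closure ((J : Set A) * (powSet J (i + j + 1) : Set A))).zero_mem
    | add x₁ x₂ hx₁ hx₂ ih₁ ih₂ => simpa [add_mul] using add_mem ih₁ ih₂
    | neg x₁ hx₁ ih₁ => simpa [neg_mul] using neg_mem ih₁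

end PowSet

theorem Ring.mul_lie {A : Type*} [NonUnitalRing A] (u v y : A) :
    ⁅u * v, y⁆ = u * ⁅v, y⁆ + ⁅u, y⁆ * v := by
  simp only [Ring.lie_def, mul_sub, sub_mul, mul_assoc]
  abel

theorem Ring.lie_mul {A : Type*} [NonUnitalRing A] (x u v : A) :
    ⁅x, u * v⁆ = ⁅x, u⁆ * v + u * ⁅x, v⁆ := by
  simp only [Ring.lie_def, mul_sub, sub_mul, mul_assoc]
  abel

section Commutator

attribute [local instance] LieRing.ofAssociativeRing

variable {A : Type*} [Ring A] {h : A} {J : Ideal A}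

theorem map_mem_of_mem_powSet_succ_succ {n : ℕ} {K : AddSubgroup A} (f : A →+ A)
    (hf : ∀ u ∈ J, ∀ v ∈ powSet J (n + 1), f (u * v) ∈ K) {x : A}
    (hx : x ∈ powSet J (n + 2)) : f x ∈ K :=
  (AddSubgroup.closure_le (K.comap f)).2 (Set.mul_subset_iff.2 hf) hx

theorem powSet_mul_smul_powSet_mem (hcen : ∀ a : A, h * a = a * h)
    (hJ₂ : ∀ x ∈ J, ∀ a : A, x * a ∈ J) {m n k : ℕ} {u w : A} (hu : u ∈ powSet J m)
    (hw : w ∈ h • powSet J n) (hk : m + n = k) : u * w ∈ h • powSet J k := by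
  obtain ⟨z, hz, rfl⟩ := (AddSubgroup.mem_smul_pointwise_iff_exists _ _ _).1 hw
  rw [smul_eq_mul, ← mul_assoc, ← hcen, mul_assoc, ← hk]
  exact AddSubgroup.smul_mem_pointwise_smul _ _ _ (powSet_mul_mem J hJ₂ m n hu hz)

theorem smul_powSet_mul_powSet_mem (hJ₂ : ∀ x ∈ J, ∀ a : A, x * a ∈ J) {m n k : ℕ} {w v : A}
    (hw : w ∈ h • powSet J m) (hv : v ∈ powSet J n) (hk : m + n = k) :
    w * v ∈ h • powSet J k := by
  obtain ⟨z, hz, rfl⟩ := (AddSubgroup.mem_smul_pointwise_iff_exists _ _ _).1 hw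
  rw [smul_eq_mul, mul_assoc, ← hk]
  exact AddSubgroup.smul_mem_pointwise_smul _ _ _ (powSet_mul_mem J hJ₂ m n hz hv)

theorem lie_mem_smul_powSet_of_mem_ideal (hcen : ∀ a : A, h * a = a * h)
    (hJ₂ : ∀ x ∈ J, ∀ a : A, x * a ∈ J) (hA : ∀ a b : A, ⁅a, b⁆ ∈ h • (⊤ : AddSubgroup A))
    (hJ : ∀ x ∈ J, ∀ y ∈ J, ⁅x, y⁆ ∈ h • J.toAddSubgroup) {x : A} (hx : x ∈ J) :
    ∀ {j : ℕ} {y : A}, y ∈ powSet J j → ⁅x, y⁆ ∈ h • powSet J j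
  | 0, y, _ => hA x y
  | 1, y, hy => hJ x hx y hy
  | j + 2, y, hy => by
    refine map_mem_of_mem_powSet_succ_succ (AddMonoidHom.mk' (⁅x, ·⁆) (lie_add x)) ?_ hy
    intro u hu v hv
    rw [AddMonoidHom.mk'_apply, Ring.lie_mul]
    exact add_mem (smul_powSet_mul_powSet_mem (m := 1) hJ₂ (hJ x hx u hu) hv (by omega))
      (powSet_mul_smul_powSet_mem (m := 1) hcen hJ₂ hu
        (lie_mem_smul_powSet_of_mem_ideal hcen hJ₂ hA hJ hx hv) (by omega))

theorem lie_mem_smul_powSet_of_mem_powSet_succ (hcen : ∀ a : A, h * a = a * h)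
    (hJ₂ : ∀ x ∈ J, ∀ a : A, x * a ∈ J) (hA : ∀ a b : A, ⁅a, b⁆ ∈ h • (⊤ : AddSubgroup A))
    (hJ : ∀ x ∈ J, ∀ y ∈ J, ⁅x, y⁆ ∈ h • J.toAddSubgroup) :
    ∀ {i j : ℕ} {x y : A}, x ∈ powSet J (i + 1) → y ∈ powSet J j → ⁅x, y⁆ ∈ h • powSet J (i + j)
  | 0, j, x, y, hx, hy => by
    rw [zero_add]
    exact lie_mem_smul_powSet_of_mem_ideal hcen hJ₂ hA hJ hx hy
  | i + 1, j, x, y, hx, hy => by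
    refine map_mem_of_mem_powSet_succ_succ (AddMonoidHom.mk' (⁅·, y⁆) (add_lie · · y)) ?_ hx
    intro u hu v hv
    rw [AddMonoidHom.mk'_apply, Ring.mul_lie]
    exact add_mem
      (powSet_mul_smul_powSet_mem (m := 1) hcen hJ₂ hu
        (lie_mem_smul_powSet_of_mem_powSet_succ hcen hJ₂ hA hJ hv hy) (by omega))
      (smul_powSet_mul_powSet_mem (n := i + 1) hJ₂
        (lie_mem_smul_powSet_of_mem_ideal hcen hJ₂ hA hJ hu hy) hv (by omega))

theorem lie_mem_smul_powSet (hcen : ∀ a : A, h * a = a * h)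
    (hJ₂ : ∀ x ∈ J, ∀ a : A, x * a ∈ J) (hA : ∀ a b : A, ⁅a, b⁆ ∈ h • (⊤ : AddSubgroup A))
    (hJ : ∀ x ∈ J, ∀ y ∈ J, ⁅x, y⁆ ∈ h • J.toAddSubgroup) {i j : ℕ} {x y : A}
    (hx : x ∈ powSet J i) (hy : y ∈ powSet J j) : ⁅x, y⁆ ∈ h • powSet J (i + j - 1) := by
  rcases i with _ | i
  · rcases j with _ | j
    · exact hA x y
    · rw [← lie_skew, show 0 + (j + 1) - 1 = j + 0 by omega]
      exact neg_mem (lie_mem_smul_powSet_of_mem_powSet_succ hcen hJ₂ hA hJ hy hx)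
  · rw [show i + 1 + j - 1 = i + j by omega]
    exact lie_mem_smul_powSet_of_mem_powSet_succ hcen hJ₂ hA hJ hx hy

end Commutator

/-- Let `A` be a ring, `h` a central element and `J` a two-sided ideal of `A`.
If `ab - ba ∈ hA` for all `a, b ∈ A` and `xy - yx ∈ hJ` for all `x, y ∈ J`, then for all
`i, j ≥ 0` with `i + j ≥ 1` and all `x ∈ J^i`, `y ∈ J^j` one has `xy - yx ∈ h·J^{i+j-1}`
(with the convention `J^0 = A`). -/
theorem commutator_mem_smul_powSet {A : Type*} [Ring A] (h : A)
    (hcen : ∀ a : A, h * a = a * h)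
    (J : Ideal A) (hJtwoSided : ∀ x ∈ J, ∀ a : A, x * a ∈ J)
    (hA : ∀ a b : A, ∃ c : A, a * b - b * a = h * c)
    (hJ : ∀ x ∈ J, ∀ y ∈ J, ∃ z ∈ J, x * y - y * x = h * z) :
    ∀ i j : ℕ, 1 ≤ i + j → ∀ x ∈ powSet J i, ∀ y ∈ powSet J j,
      ∃ z ∈ powSet J (i + j - 1), x * y - y * x = h * z := by
  have mem_smul_iff (S : AddSubgroup A) (x y : A) :
      ⁅x, y⁆ ∈ h • S ↔ ∃ z ∈ S, x * y - y * x = h * z := by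
    simp only [AddSubgroup.mem_smul_pointwise_iff_exists, smul_eq_mul, Ring.lie_def, eq_comm]
  intro i j _ x hx y hy
  refine (mem_smul_iff _ x y).1 (lie_mem_smul_powSet hcen hJtwoSided ?_ ?_ hx hy)
  · intro a b
    obtain ⟨c, hc⟩ := hA a b
    exact (mem_smul_iff _ a b).2 ⟨c, AddSubgroup.mem_top c, hc⟩
  · intro x hx y hy
    exact (mem_smul_iff _ x y).2 (hJ x hx y hy)
end

section
/- Let A be a ring equipped with a decreasing filtration A = F_0 ⊇ F_1 ⊇ F_2 ⊇ ⋯ by additive subgroups such that F_i·F_j ⊆ F_{i+j} for all i, j. Assume the filtration is separated (⋂_n F_n = 0) and complete (the canonical map A → lim_n A/F_n is bijective). If the associated graded ring ⊕_{n≥0} F_n/F_{n+1} (with multiplication induced from that of A) is left Noetherian, then A is left Noetherian. -/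
/-!
Let `I` be a left ideal of `A`. The symbols of the elements of `I` span a left ideal of the
associated graded ring, which is finitely generated, say by the symbols of `x i ∈ I ∩ F (d i)`.
If `y ∈ I ∩ F k`, writing its symbol as a homogeneous combination of those of the `x i` and
lifting the coefficients gives `c i ∈ F (k - d i)` with `y - ∑ c i * x i ∈ I ∩ F (k + 1)`.
Iterating, the partial sums of the coefficients converge by completeness, and the limits `b i`
satisfy `y - ∑ b i * x i ∈ ⋂ F k = 0`. Hence the `x i` generate `I`.
-/

open Finset

section Graded

variable {G S : Type*} [Ring G] [SetLike S G] [AddSubgroupClass S G] (𝒜 : ℕ → S) [GradedRing 𝒜]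

theorem exists_homogeneous_coeffs_of_mem_span {ι : Type*} [Fintype ι] {t : ι → G}
    {d : ι → ℕ} (ht : ∀ i, t i ∈ 𝒜 (d i)) {k : ℕ} {g : G} (hg : g ∈ 𝒜 k)
    (hspan : g ∈ Submodule.span G (Set.range t)) :
    ∃ a : ι → G, (∀ i, a i ∈ 𝒜 (k - d i)) ∧ (∀ i, k < d i → a i = 0) ∧
      g = ∑ i, a i * t i := by
  classical
  obtain ⟨b, rfl⟩ := (Submodule.mem_span_range_iff_exists_fun G).mp hspan
  refine ⟨fun i => if d i ≤ k then DirectSum.decompose 𝒜 (b i) (k - d i) else 0,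
    fun i => ?_, fun i hi => if_neg (by omega), ?_⟩
  · dsimp only
    split_ifs
    exacts [SetLike.coe_mem _, zero_mem _]
  · conv_lhs => rw [← DirectSum.decompose_of_mem_same 𝒜 hg]
    rw [DirectSum.decompose_sum, DFinsupp.finsetSum_apply, AddSubmonoidClass.coe_finsetSum]
    refine sum_congr rfl fun i _ => ?_
    rw [smul_eq_mul, DirectSum.coe_decompose_mul_of_right_mem 𝒜 k (ht i)]
    by_cases h : d i ≤ k <;> simp [h]

end Graded

namespace FilteredRing

section Symbol

variable {A G : Type*} [Ring A] [Ring G] {F : ℕ → AddSubgroup A} (σ : ∀ n, F n →+ G)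

open scoped Classical in
noncomputable def symbol (n : ℕ) (a : A) : G :=
  if h : a ∈ F n then σ n ⟨a, h⟩ else 0

variable {σ}

theorem symbol_of_mem {n : ℕ} {a : A} (h : a ∈ F n) : symbol σ n a = σ n ⟨a, h⟩ :=
  dif_pos h

variable (σ) in
theorem symbol_mem_range (n : ℕ) (a : A) : symbol σ n a ∈ (σ n).range := by
  unfold symbol
  split_ifs
  exacts [⟨_, rfl⟩, zero_mem _]

theorem exists_symbol_eq {n : ℕ} {g : G} (hg : g ∈ (σ n).range) :
    ∃ a ∈ F n, symbol σ n a = g := by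
  obtain ⟨⟨a, ha⟩, rfl⟩ := hg
  exact ⟨a, ha, symbol_of_mem ha⟩

variable (σ) in
theorem symbol_zero (n : ℕ) : symbol σ n (0 : A) = 0 := by
  rw [symbol_of_mem (zero_mem _)]
  exact map_zero (σ n)

theorem symbol_add {n : ℕ} {a b : A} (ha : a ∈ F n) (hb : b ∈ F n) :
    symbol σ n (a + b) = symbol σ n a + symbol σ n b := by
  rw [symbol_of_mem ha, symbol_of_mem hb, symbol_of_mem (add_mem ha hb), ← map_add]
  rfl

theorem symbol_sub {n : ℕ} {a b : A} (ha : a ∈ F n) (hb : b ∈ F n) :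
    symbol σ n (a - b) = symbol σ n a - symbol σ n b := by
  rw [symbol_of_mem ha, symbol_of_mem hb, symbol_of_mem (sub_mem ha hb), ← map_sub]
  rfl

theorem symbol_sum {ι : Type*} {s : Finset ι} {n : ℕ} {f : ι → A} (h : ∀ i ∈ s, f i ∈ F n) :
    symbol σ n (∑ i ∈ s, f i) = ∑ i ∈ s, symbol σ n (f i) := by
  induction s using Finset.cons_induction with
  | empty => exact symbol_zero σ n
  | cons i s hi ih =>
    have hs : ∀ j ∈ s, f j ∈ F n := fun j hj => h j (mem_cons_of_mem hj)
    rw [sum_cons, sum_cons, symbol_add (h i (mem_cons_self i s)) (sum_mem hs), ih hs]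

theorem symbol_mul (hmul : ∀ i j : ℕ, ∀ x ∈ F i, ∀ y ∈ F j, x * y ∈ F (i + j))
    (hσmul : ∀ (i j : ℕ) (x : F i) (y : F j),
      σ (i + j) ⟨(x : A) * (y : A), hmul i j x x.2 y y.2⟩ = σ i x * σ j y)
    {i j k : ℕ} {a b : A} (ha : a ∈ F i) (hb : b ∈ F j) (hk : i + j = k) :
    symbol σ k (a * b) = symbol σ i a * symbol σ j b := by
  subst hk
  rw [symbol_of_mem ha, symbol_of_mem hb, symbol_of_mem (hmul i j a ha b hb)]
  exact hσmul i j ⟨a, ha⟩ ⟨b, hb⟩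

theorem symbol_eq_symbol_iff (hker : ∀ (n : ℕ) (x : F n), σ n x = 0 ↔ (x : A) ∈ F (n + 1))
    {n : ℕ} {a b : A} (ha : a ∈ F n) (hb : b ∈ F n) :
    symbol σ n a = symbol σ n b ↔ a - b ∈ F (n + 1) := by
  rw [← sub_eq_zero, ← symbol_sub ha hb, symbol_of_mem (sub_mem ha hb), hker]

end Symbol

section Complete

variable {A : Type*} [Ring A] {F : ℕ → AddSubgroup A}

theorem exists_sub_sum_range_add_mem
    (hcomplete : ∀ f : ℕ → A, (∀ n : ℕ, f (n + 1) - f n ∈ F n) →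
      ∃ a : A, ∀ n : ℕ, a - f n ∈ F n)
    {c : ℕ → A} {d : ℕ} (hc : ∀ j, c (j + d) ∈ F j) :
    ∃ b : A, ∀ m, b - ∑ j ∈ range (m + d), c j ∈ F m :=
  hcomplete _ fun m => by
    rw [Nat.add_right_comm, sum_range_succ, add_sub_cancel_left]
    exact hc m

theorem eq_zero_of_forall_mem_add (hanti : Antitone F) (hsep : (⨅ n : ℕ, F n) = ⊥)
    {a : A} {D : ℕ} (h : ∀ m, a ∈ F (m + D)) : a = 0 := by
  have ha : a ∈ ⨅ n, F n := AddSubgroup.mem_iInf.mpr fun m => hanti (m.le_add_right D) (h m)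
  rwa [hsep, AddSubgroup.mem_bot] at ha

theorem exists_partial_coeffs {ι : Type*} [Fintype ι] {S : Set A} {x : ι → A} {d : ι → ℕ}
    (happrox : ∀ k, ∀ y ∈ S, y ∈ F k → ∃ c : ι → A, (∀ i, c i ∈ F (k - d i)) ∧
      y - ∑ i, c i * x i ∈ S ∧ y - ∑ i, c i * x i ∈ F (k + 1))
    {y : A} (hyS : y ∈ S) (hy0 : y ∈ F 0) :
    ∃ C : ℕ → ι → A, (∀ j i, C j i ∈ F (j - d i)) ∧
      ∀ k, y - ∑ i, (∑ j ∈ range k, C j i) * x i ∈ F k := by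
  choose! c hcF hcS hcF' using happrox
  let r : ℕ → A := fun k => Nat.rec y (fun k r => r - ∑ i, c k r i * x i) k
  have hr : ∀ k, r k ∈ S ∧ r k ∈ F k := by
    intro k
    induction k with
    | zero => exact ⟨hyS, hy0⟩
    | succ k ih => exact ⟨hcS k _ ih.1 ih.2, hcF' k _ ih.1 ih.2⟩
  refine ⟨fun j => c j (r j), fun j => hcF j _ (hr j).1 (hr j).2, fun k => ?_⟩
  suffices y - ∑ i, (∑ j ∈ range k, c j (r j) i) * x i = r k from this ▸ (hr k).2
  induction k with
  | zero => simp [r]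
  | succ k ih =>
    simp only [sum_range_succ, add_mul, sum_add_distrib, ← sub_sub, ih]
    rfl

theorem exists_eq_sum_mul_of_partial_coeffs {ι : Type*} [Fintype ι]
    (hanti : Antitone F) (hmul : ∀ i j : ℕ, ∀ x ∈ F i, ∀ y ∈ F j, x * y ∈ F (i + j))
    (hsep : (⨅ n : ℕ, F n) = ⊥)
    (hcomplete : ∀ f : ℕ → A, (∀ n : ℕ, f (n + 1) - f n ∈ F n) →
      ∃ a : A, ∀ n : ℕ, a - f n ∈ F n)
    {x : ι → A} {d : ι → ℕ} (hxF : ∀ i, x i ∈ F (d i)) {y : A} {C : ℕ → ι → A}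
    (hC : ∀ j i, C j i ∈ F (j - d i)) (hres : ∀ k, y - ∑ i, (∑ j ∈ range k, C j i) * x i ∈ F k) :
    ∃ b : ι → A, y = ∑ i, b i * x i := by
  choose b hb using fun i => exists_sub_sum_range_add_mem hcomplete (c := fun j => C j i)
    (d := d i) fun j => by simpa using hC (j + d i) i
  obtain ⟨D, hD⟩ := Finite.exists_le d
  refine ⟨b, sub_eq_zero.mp (eq_zero_of_forall_mem_add hanti hsep (D := D) fun m => ?_)⟩
  set k := m + D
  have hterm : ∀ i, (b i - ∑ j ∈ range k, C j i) * x i ∈ F k := by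
    intro i
    have hk : k - d i + d i = k := Nat.sub_add_cancel ((hD i).trans (Nat.le_add_left D m))
    simpa only [hk] using hmul _ _ _ (hb i (k - d i)) _ (hxF i)
  have hsplit : y - ∑ i, b i * x i = (y - ∑ i, (∑ j ∈ range k, C j i) * x i)
      - ∑ i, (b i - ∑ j ∈ range k, C j i) * x i := by
    simp only [sub_mul, sum_sub_distrib]
    abel
  rw [hsplit]
  exact sub_mem (hres k) (sum_mem fun i _ => hterm i)

end Complete

theorem exists_approx_of_symbol_mem_span {A G : Type*} [Ring A] [Ring G] {F : ℕ → AddSubgroup A}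
    (σ : ∀ n, F n →+ G) [GradedRing fun n => (σ n).range]
    (hmul : ∀ i j : ℕ, ∀ x ∈ F i, ∀ y ∈ F j, x * y ∈ F (i + j))
    (hσmul : ∀ (i j : ℕ) (x : F i) (y : F j),
      σ (i + j) ⟨(x : A) * (y : A), hmul i j x x.2 y y.2⟩ = σ i x * σ j y)
    (hker : ∀ (n : ℕ) (x : F n), σ n x = 0 ↔ (x : A) ∈ F (n + 1))
    {ι : Type*} [Fintype ι] (I : Submodule A A) {x : ι → A} {d : ι → ℕ}
    (hxI : ∀ i, x i ∈ I) (hxF : ∀ i, x i ∈ F (d i))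
    (hspan : ∀ n, ∀ y ∈ I, y ∈ F n →
      symbol σ n y ∈ Submodule.span G (Set.range fun i => symbol σ (d i) (x i)))
    (k : ℕ) (y : A) (hyI : y ∈ I) (hyF : y ∈ F k) :
    ∃ c : ι → A, (∀ i, c i ∈ F (k - d i)) ∧
      y - ∑ i, c i * x i ∈ I ∧ y - ∑ i, c i * x i ∈ F (k + 1) := by
  classical
  obtain ⟨a, ha, ha0, hya⟩ := exists_homogeneous_coeffs_of_mem_span (fun n => (σ n).range)
    (fun i => symbol_mem_range σ (d i) (x i)) (symbol_mem_range σ k y) (hspan k y hyI hyF)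
  choose c hcF hca using fun i => exists_symbol_eq (ha i)
  set c' : ι → A := fun i => if d i ≤ k then c i else 0
  have hterm : ∀ i, c' i * x i ∈ F k ∧ symbol σ k (c' i * x i) = a i * symbol σ (d i) (x i) := by
    intro i
    by_cases hik : d i ≤ k
    · have hk : k - d i + d i = k := Nat.sub_add_cancel hik
      simp only [c', if_pos hik]
      refine ⟨hk ▸ hmul _ _ _ (hcF i) _ (hxF i), ?_⟩
      rw [symbol_mul hmul hσmul (hcF i) (hxF i) hk, hca]
    · simp only [c', if_neg hik, zero_mul, ha0 i (not_le.mp hik), symbol_zero, zero_mem,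
        and_self]
  refine ⟨c', fun i => ?_, sub_mem hyI (sum_mem fun i _ => I.smul_mem _ (hxI i)), ?_⟩
  · by_cases hik : d i ≤ k
    · simpa only [c', if_pos hik] using hcF i
    · simpa only [c', if_neg hik] using zero_mem _
  · refine (symbol_eq_symbol_iff hker hyF (sum_mem fun i _ => (hterm i).1)).mp ?_
    rw [symbol_sum fun i _ => (hterm i).1, hya]
    exact sum_congr rfl fun i _ => (hterm i).2.symm

end FilteredRing

open FilteredRing

/-- Let `A` be a ring with a decreasing, separated and complete multiplicative
filtration `A = F 0 ⊇ F 1 ⊇ ⋯` by additive subgroups. If the associated graded ring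
`⊕_{n ≥ 0} F n / F (n+1)` (encoded here by a ring `G` together with the additive symbol maps
`σ n : F n →+ G` which are multiplicative, unital, have kernels `F (n+1)` and whose ranges
decompose `G` as an internal direct sum) is left Noetherian, then `A` is left Noetherian. -/
theorem isNoetherianRing_of_gradedNoetherian {A : Type u} [Ring A]
    (F : ℕ → AddSubgroup A)
    (hF0 : F 0 = ⊤)
    (hdec : ∀ n : ℕ, F (n + 1) ≤ F n)
    (hmul : ∀ i j : ℕ, ∀ x ∈ F i, ∀ y ∈ F j, x * y ∈ F (i + j))
    -- separated:
    (hsep : (⨅ n : ℕ, F n) = ⊥)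
    -- complete:
    (hcomplete : ∀ f : ℕ → A, (∀ n : ℕ, f (n + 1) - f n ∈ F n) →
      ∃ a : A, ∀ n : ℕ, a - f n ∈ F n)
    -- the associated graded ring `⊕_{n≥0} F n / F (n+1)` is left Noetherian:
    (hgr : ∃ (G : Type u) (_ : Ring G) (σ : ∀ n : ℕ, F n →+ G),
      (∀ (i j : ℕ) (x : F i) (y : F j),
          σ (i + j) ⟨(x : A) * (y : A), hmul i j x x.2 y y.2⟩ = σ i x * σ j y) ∧
      (∀ (n : ℕ) (x : F n), σ n x = 0 ↔ (x : A) ∈ F (n + 1)) ∧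
      σ 0 ⟨1, by rw [hF0]; exact AddSubgroup.mem_top 1⟩ = 1 ∧
      DirectSum.IsInternal (fun n : ℕ => (σ n).range) ∧
      IsNoetherianRing G) :
    IsNoetherianRing A := by
  obtain ⟨G, _, σ, hσmul, hker, hone, hint, hG⟩ := hgr
  let _ : GradedRing fun n => (σ n).range :=
    { hint.chooseDecomposition with
      one_mem := ⟨_, hone⟩
      mul_mem := by
        rintro i j _ _ ⟨x, rfl⟩ ⟨y, rfl⟩
        exact ⟨_, hσmul i j x y⟩ }
  refine isNoetherianRing_iff.mpr ⟨fun I => ?_⟩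
  let L : Set G := {g | ∃ n y, y ∈ I ∧ y ∈ F n ∧ symbol σ n y = g}
  obtain ⟨T, hTL, hLT⟩ :=
    (Submodule.fg_span_iff_fg_span_finset_subset L).mp
      (IsNoetherian.noetherian (Submodule.span G L))
  choose d x hxI hxF hxT using fun t : T => hTL t.2
  have hT : Set.range (fun t => symbol σ (d t) (x t)) = T := by simp [hxT]
  have happrox := exists_approx_of_symbol_mem_span σ hmul hσmul hker I hxI hxF
    fun n y hyI hyF => hT ▸ hLT ▸ Submodule.subset_span ⟨n, y, hyI, hyF, rfl⟩
  have hI : I = Submodule.span A (Set.range x) := by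
    refine le_antisymm (fun y hy => ?_) (Submodule.span_le.mpr (Set.range_subset_iff.mpr hxI))
    obtain ⟨C, hC, hres⟩ := exists_partial_coeffs happrox hy (hF0 ▸ AddSubgroup.mem_top y)
    obtain ⟨b, hb⟩ := exists_eq_sum_mul_of_partial_coeffs (antitone_nat_of_succ_le hdec) hmul
      hsep hcomplete hxF hC hres
    exact (Submodule.mem_span_range_iff_exists_fun A).mpr ⟨b, hb.symm⟩
  exact hI ▸ Submodule.fg_span (Set.finite_range x)
end

section
/- Let A be a ring and J a two-sided ideal of A such that the blow-up ring Bl_J(A) is left Noetherian (in particular A, being a quotient of Bl_J(A), is left Noetherian). Then the Artin–Rees lemma holds for J: for every finitely generated left A-module M and every submodule N ⊆ M there exists k ≥ 0 such that J^nM ∩ N = J^{n−k}·(J^kM ∩ N) for all n ≥ k. -/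
open scoped Pointwise
open Polynomial

section BlowUp

variable {A : Type*} [Ring A]

/-- The blow-up ring `Bl_J(A) = ⊕_{i ≥ 0} J^i` of a two-sided ideal `J ⊆ A`, realized as the
subring of the polynomial ring `A[X]` consisting of the polynomials whose `X^i`-coefficient
lies in `J^i` for every `i`. -/
def blowUp (J : Ideal A) (hJ : ∀ x ∈ J, ∀ a : A, x * a ∈ J) : Subring A[X] where
  carrier := {p : A[X] | ∀ i : ℕ, p.coeff i ∈ powSet J i}
  zero_mem' := fun i => by
    simp only [Polynomial.coeff_zero]; exact (powSet J i).zero_mem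
  one_mem' := fun i => by
    rcases i with _ | i
    · exact AddSubgroup.mem_top _
    · simp only [Polynomial.coeff_one, Nat.succ_ne_zero, if_neg (Nat.succ_ne_zero i).symm]
      simpa using (powSet J (i + 1)).zero_mem
  add_mem' := fun {p q} hp hq i => by
    simpa [Polynomial.coeff_add] using add_mem (hp i) (hq i)
  neg_mem' := fun {p} hp i => by
    simpa [Polynomial.coeff_neg] using neg_mem (hp i)
  mul_mem' := fun {p q} hp hq n => by
    rw [Polynomial.coeff_mul]
    refine AddSubgroup.sum_mem _ fun c hc => ?_
    have h := powSet_mul_mem J hJ c.1 c.2 (hp c.1) (hq c.2)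
    rwa [Finset.HasAntidiagonal.mem_antidiagonal.mp hc] at h

end BlowUp

section Completion

variable {A : Type*} [Ring A]

theorem powSet_succ_le (J : Ideal A) :
    ∀ n : ℕ, powSet J (n + 1) ≤ powSet J n
  | 0 => le_top
  | n + 1 => by
    rw [powSet_succ_succ]
    refine (AddSubgroup.closure_le _).mpr ?_
    rintro z ⟨u, hu, v, hv, rfl⟩
    exact powSet_mul_mem_left J (n + 1) u hv

/-- For a subset `S ⊆ A` and a submodule `N` of an `A`-module `M`, the submodule `S·N` of `M`
spanned by all products `x • m` with `x ∈ S`, `m ∈ N`. -/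
def jsmul (S : Set A) {M : Type*} [AddCommGroup M] [Module A M] (N : Submodule A M) :
    Submodule A M :=
  Submodule.span A {z | ∃ x ∈ S, ∃ m ∈ N, z = x • m}

/-- The submodule `J^n M` of an `A`-module `M`. -/
def jadic (J : Ideal A) (M : Type*) [AddCommGroup M] [Module A M] (n : ℕ) : Submodule A M :=
  jsmul ((powSet J n : AddSubgroup A) : Set A) (⊤ : Submodule A M)

theorem jadic_succ_le (J : Ideal A) (M : Type*) [AddCommGroup M] [Module A M] (n : ℕ) :
    jadic J M (n + 1) ≤ jadic J M n := by
  refine Submodule.span_mono ?_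
  rintro z ⟨x, hx, m, hm, rfl⟩
  exact ⟨x, powSet_succ_le J n hx, m, hm, rfl⟩

/-- The transition map `M/J^{n+1}M → M/J^nM`. -/
def transition (J : Ideal A) (M : Type*) [AddCommGroup M] [Module A M] (n : ℕ) :
    (M ⧸ jadic J M (n + 1)) →ₗ[A] M ⧸ jadic J M n :=
  Submodule.mapQ _ _ LinearMap.id (fun _ hx => jadic_succ_le J M n hx)

/-- The `J`-adic completion `M^∧ = lim_n M/J^nM` of an `A`-module `M`, realized as the
module of compatible sequences in `∀ n, M/J^nM`. -/
def adicCompletion (J : Ideal A) (M : Type*) [AddCommGroup M] [Module A M] :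
    Submodule A (∀ n : ℕ, M ⧸ jadic J M n) where
  carrier := {f | ∀ n : ℕ, transition J M n (f (n + 1)) = f n}
  add_mem' := fun {f g} hf hg n => by
    simp only [Pi.add_apply, map_add, hf n, hg n]
  zero_mem' := fun n => by simp
  smul_mem' := fun a f hf n => by
    simp only [Pi.smul_apply, map_smul, hf n]

theorem jadic_le_comap (J : Ideal A) {M M₂ : Type*} [AddCommGroup M] [Module A M]
    [AddCommGroup M₂] [Module A M₂] (f : M →ₗ[A] M₂) (n : ℕ) :
    jadic J M n ≤ (jadic J M₂ n).comap f := by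
  rw [jadic, jsmul, Submodule.span_le]
  rintro z ⟨x, hx, m, _, rfl⟩
  simp only [SetLike.mem_coe, Submodule.mem_comap, map_smul]
  exact Submodule.subset_span ⟨x, hx, f m, Submodule.mem_top, rfl⟩

/-- The map `M/J^nM → M₂/J^nM₂` induced by a linear map `f : M → M₂`. -/
def inducedQ (J : Ideal A) {M M₂ : Type*} [AddCommGroup M] [Module A M]
    [AddCommGroup M₂] [Module A M₂] (f : M →ₗ[A] M₂) (n : ℕ) :
    (M ⧸ jadic J M n) →ₗ[A] M₂ ⧸ jadic J M₂ n :=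
  Submodule.mapQ _ _ f (jadic_le_comap J f n)

theorem transition_inducedQ (J : Ideal A) {M M₂ : Type*} [AddCommGroup M] [Module A M]
    [AddCommGroup M₂] [Module A M₂] (f : M →ₗ[A] M₂) (n : ℕ)
    (x : M ⧸ jadic J M (n + 1)) :
    transition J M₂ n (inducedQ J f (n + 1) x) = inducedQ J f n (transition J M n x) := by
  obtain ⟨m, rfl⟩ := Submodule.Quotient.mk_surjective _ x
  simp [transition, inducedQ, Submodule.mapQ_apply]

/-- The map `M^∧ → M₂^∧` between `J`-adic completions induced by a linear map `f : M → M₂`;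
this is the natural functorial structure of the `J`-adic completion. -/
def completionMap (J : Ideal A) {M M₂ : Type*} [AddCommGroup M] [Module A M]
    [AddCommGroup M₂] [Module A M₂] (f : M →ₗ[A] M₂) :
    adicCompletion J M →ₗ[A] adicCompletion J M₂ where
  toFun g := ⟨fun n => inducedQ J f n (g.1 n), fun n => by
    rw [transition_inducedQ, g.2 n]⟩
  map_add' g₁ g₂ := Subtype.ext (funext fun n => by
    simp [Submodule.coe_add, Pi.add_apply, map_add])
  map_smul' a g := Subtype.ext (funext fun n => by
    simp [Submodule.coe_smul, Pi.smul_apply, map_smul])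

end Completion

/-!
Choose a presentation `π : Aʳ → M`. The Rees module `⊕ₙ (JⁿAʳ ∩ π⁻¹N)` is a `Bl_J(A)`-submodule
of `Bl_J(A)ʳ`, hence finitely generated; say by elements of degree at most `k`. Writing an element
of degree `n ≥ k` in terms of these generators exhibits it as a sum of terms in
`J^{n-j}(JʲAʳ ∩ π⁻¹N) ⊆ J^{n-k}(JᵏAʳ ∩ π⁻¹N)` with `j ≤ k`, and applying `π` gives the statement
for `M`.
-/

section Jsmul

variable {A : Type*} [Ring A] {M M₂ : Type*} [AddCommGroup M] [Module A M]
  [AddCommGroup M₂] [Module A M₂]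

theorem jsmul_mono {S T : Set A} (hST : S ⊆ T) {P Q : Submodule A M} (hPQ : P ≤ Q) :
    jsmul S P ≤ jsmul T Q :=
  Submodule.span_mono fun _ ⟨x, hx, m, hm, h⟩ => ⟨x, hST hx, m, hPQ hm, h⟩

theorem jsmul_le (S : Set A) (P : Submodule A M) : jsmul S P ≤ P :=
  Submodule.span_le.mpr fun _ ⟨x, _, _, hm, h⟩ => h ▸ P.smul_mem x hm

theorem le_jsmul_of_one_mem {S : Set A} (hS : (1 : A) ∈ S) (P : Submodule A M) :
    P ≤ jsmul S P :=
  fun m hm => Submodule.subset_span ⟨1, hS, m, hm, (one_smul A m).symm⟩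

theorem jsmul_closure_le (S : Set A) (P : Submodule A M) :
    jsmul (AddSubgroup.closure S) P ≤ jsmul S P := by
  rw [jsmul, Submodule.span_le]
  rintro _ ⟨x, hx, m, hm, rfl⟩
  induction hx using AddSubgroup.closure_induction with
  | mem y hy => exact Submodule.subset_span ⟨y, hy, m, hm, rfl⟩
  | zero => simp
  | add y z _ _ hy hz => rw [add_smul]; exact add_mem hy hz
  | neg y _ hy => rw [neg_smul]; exact neg_mem hy

theorem jsmul_mul_le (S T : Set A) (P : Submodule A M) :
    jsmul (S * T) P ≤ jsmul S (jsmul T P) := by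
  rw [jsmul, Submodule.span_le]
  rintro _ ⟨_, ⟨x, hx, y, hy, rfl⟩, m, hm, rfl⟩
  exact Submodule.subset_span
    ⟨x, hx, y • m, Submodule.subset_span ⟨y, hy, m, hm, rfl⟩, mul_smul x y m⟩

theorem jsmul_map (f : M →ₗ[A] M₂) (S : Set A) (P : Submodule A M) :
    (jsmul S P).map f = jsmul S (P.map f) := by
  rw [jsmul, Submodule.map_span, jsmul]
  congr 1
  ext z
  constructor
  · rintro ⟨_, ⟨x, hx, m, hm, rfl⟩, rfl⟩
    exact ⟨x, hx, f m, ⟨m, hm, rfl⟩, f.map_smul x m⟩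
  · rintro ⟨x, hx, _, ⟨m, hm, rfl⟩, rfl⟩
    exact ⟨x • m, ⟨x, hx, m, hm, rfl⟩, f.map_smul x m⟩

variable (J : Ideal A)

theorem jsmul_powSet_succ_le (n : ℕ) (P : Submodule A M) :
    jsmul (powSet J (n + 1)) P ≤ jsmul (powSet J 1) (jsmul (powSet J n) P) := by
  rcases n with _ | n
  · exact jsmul_mono subset_rfl (le_jsmul_of_one_mem (AddSubgroup.mem_top 1) P)
  · exact (jsmul_closure_le _ P).trans (jsmul_mul_le _ _ P)

theorem map_jadic {f : M →ₗ[A] M₂} (hf : Function.Surjective f) (n : ℕ) :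
    (jadic J M n).map f = jadic J M₂ n := by
  rw [jadic, jadic, jsmul_map, Submodule.map_top, LinearMap.range_eq_top.mpr hf]

theorem map_jadic_inf_comap {f : M →ₗ[A] M₂} (hf : Function.Surjective f) (n : ℕ)
    (N : Submodule A M₂) : (jadic J M n ⊓ N.comap f).map f = jadic J M₂ n ⊓ N := by
  rw [← Submodule.map_inf_eq_map_inf_comap, map_jadic J hf]

variable (hJ : ∀ x ∈ J, ∀ a : A, x * a ∈ J)
include hJ

theorem jsmul_powSet_jsmul_le (i l : ℕ) (P : Submodule A M) :
    jsmul (powSet J i) (jsmul (powSet J l) P) ≤ jsmul (powSet J (i + l)) P := by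
  rw [jsmul, Submodule.span_le]
  rintro _ ⟨x, hx, w, hw, rfl⟩
  induction hw using Submodule.span_induction generalizing x with
  | mem z hz =>
    obtain ⟨y, hy, m, hm, rfl⟩ := hz
    rw [smul_smul]
    exact Submodule.subset_span ⟨x * y, powSet_mul_mem J hJ i l hx hy, m, hm, rfl⟩
  | zero => simp
  | add a b _ _ ha hb => rw [smul_add]; exact add_mem (ha x hx) (hb x hx)
  | smul a w _ hw =>
    rw [smul_smul]
    exact hw _ (powSet_mul_mem_right J hJ i a hx)

theorem jsmul_powSet_add (i l : ℕ) (P : Submodule A M) :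
    jsmul (powSet J (i + l)) P = jsmul (powSet J i) (jsmul (powSet J l) P) := by
  refine le_antisymm ?_ (jsmul_powSet_jsmul_le J hJ i l P)
  induction i with
  | zero => rw [Nat.zero_add]; exact le_jsmul_of_one_mem (AddSubgroup.mem_top 1) _
  | succ i ih =>
    calc jsmul (powSet J (i + 1 + l)) P
        = jsmul (powSet J (i + l + 1)) P := by rw [Nat.add_right_comm]
      _ ≤ jsmul (powSet J 1) (jsmul (powSet J (i + l)) P) :=
        jsmul_powSet_succ_le J _ P
      _ ≤ jsmul (powSet J 1) (jsmul (powSet J i) (jsmul (powSet J l) P)) :=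
        jsmul_mono subset_rfl ih
      _ ≤ jsmul (powSet J (1 + i)) (jsmul (powSet J l) P) :=
        jsmul_powSet_jsmul_le J hJ 1 i _
      _ = _ := by rw [Nat.add_comm]

theorem jsmul_powSet_jadic_inf_le (a k : ℕ) (N : Submodule A M) :
    jsmul (powSet J a) (jadic J M k ⊓ N) ≤ jadic J M (a + k) ⊓ N :=
  le_inf ((jsmul_mono subset_rfl inf_le_left).trans (jsmul_powSet_add J hJ a k ⊤).ge)
    ((jsmul_mono subset_rfl inf_le_right).trans (jsmul_le _ N))

theorem jsmul_powSet_jadic_inf_mono {j k n : ℕ} (hjk : j ≤ k) (hkn : k ≤ n)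
    (N : Submodule A M) :
    jsmul (powSet J (n - j)) (jadic J M j ⊓ N) ≤
      jsmul (powSet J (n - k)) (jadic J M k ⊓ N) :=
  calc jsmul (powSet J (n - j)) (jadic J M j ⊓ N)
      = jsmul (powSet J (n - k)) (jsmul (powSet J (k - j)) (jadic J M j ⊓ N)) := by
        rw [← jsmul_powSet_add J hJ, show n - k + (k - j) = n - j by omega]
    _ ≤ jsmul (powSet J (n - k)) (jadic J M (k - j + j) ⊓ N) :=
        jsmul_mono subset_rfl (jsmul_powSet_jadic_inf_le J hJ _ _ N)
    _ = _ := by rw [Nat.sub_add_cancel hjk]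

end Jsmul

section BlowUpModule

open Finset

variable {A : Type*} [Ring A] (J : Ideal A) (hJ : ∀ x ∈ J, ∀ a : A, x * a ∈ J) {ι : Type*}

include hJ in
theorem mem_jadic_pi_iff [Fintype ι] {n : ℕ} {v : ι → A} :
    v ∈ jadic J (ι → A) n ↔ ∀ i, v i ∈ powSet J n := by
  classical
  constructor
  · intro hv
    induction hv using Submodule.span_induction with
    | mem z hz =>
      obtain ⟨x, hx, m, _, rfl⟩ := hz
      exact fun i => powSet_mul_mem_right J hJ n (m i) hx
    | zero => exact fun i => zero_mem _
    | add a b _ _ ha hb => exact fun i => add_mem (ha i) (hb i)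
    | smul a w _ hw => exact fun i => powSet_mul_mem_left J n a (hw i)
  · intro hv
    rw [pi_eq_sum_univ v]
    exact Submodule.sum_mem _ fun i _ =>
      Submodule.subset_span ⟨v i, hv i, _, Submodule.mem_top, rfl⟩

theorem monomial_mem_blowUp {n : ℕ} {a : A} (ha : a ∈ powSet J n) :
    monomial n a ∈ blowUp J hJ := by
  intro i
  rw [coeff_monomial]
  split_ifs with h
  · exact h ▸ ha
  · exact zero_mem _

variable (ι) in
noncomputable def piCoeff (n : ℕ) : (ι → blowUp J hJ) →+ (ι → A) :=
  ((lcoeff A n).toAddMonoidHom.comp (blowUp J hJ).subtype.toAddMonoidHom).compLeft ι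

theorem piCoeff_apply (n : ℕ) (f : ι → blowUp J hJ) (i : ι) :
    piCoeff J hJ ι n f i = (f i : A[X]).coeff n := rfl

theorem piCoeff_mem_jadic [Fintype ι] (n : ℕ) (f : ι → blowUp J hJ) :
    piCoeff J hJ ι n f ∈ jadic J (ι → A) n :=
  (mem_jadic_pi_iff J hJ).mpr fun i => (f i).2 n

theorem piCoeff_smul (n : ℕ) (b : blowUp J hJ) (f : ι → blowUp J hJ) :
    piCoeff J hJ ι n (b • f) =
      ∑ p ∈ antidiagonal n, (b : A[X]).coeff p.1 • piCoeff J hJ ι p.2 f := by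
  funext i
  simp [piCoeff_apply, coeff_mul, Finset.sum_apply]

/-- The Rees module `⊕ₙ (JⁿAᶥ ∩ N) Xⁿ`, as a submodule of `Bl_J(A)ᶥ`; the condition on `Jⁿ` is
built into `Bl_J(A)`. -/
def reesSubmodule (N : Submodule A (ι → A)) : Submodule (blowUp J hJ) (ι → blowUp J hJ) where
  carrier := {f | ∀ n, piCoeff J hJ ι n f ∈ N}
  add_mem' hf hg n := by rw [map_add]; exact add_mem (hf n) (hg n)
  zero_mem' n := by rw [map_zero]; exact zero_mem N
  smul_mem' b f hf n := by
    rw [piCoeff_smul]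
    exact sum_mem fun p _ => N.smul_mem _ (hf p.2)

theorem exists_mem_reesSubmodule_piCoeff_eq [Fintype ι] {N : Submodule A (ι → A)} {n : ℕ}
    {u : ι → A} (hu : u ∈ jadic J (ι → A) n ⊓ N) :
    ∃ f ∈ reesSubmodule J hJ N, piCoeff J hJ ι n f = u := by
  let f : ι → blowUp J hJ := fun i =>
    ⟨monomial n (u i), monomial_mem_blowUp J hJ ((mem_jadic_pi_iff J hJ).mp hu.1 i)⟩
  have hf : ∀ m, piCoeff J hJ ι m f = if n = m then u else 0 := fun m => by
    funext i
    split_ifs <;> simp_all [piCoeff_apply, f, coeff_monomial]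
  refine ⟨f, fun m => ?_, (hf n).trans (if_pos rfl)⟩
  rw [hf]
  split_ifs
  exacts [hu.2, zero_mem N]

theorem piCoeff_mem_jsmul_of_mem_span [Fintype ι] {N : Submodule A (ι → A)}
    {S : Finset (ι → blowUp J hJ)} (hSN : (S : Set (ι → blowUp J hJ)) ⊆ reesSubmodule J hJ N)
    {k : ℕ} (hSk : ∀ g ∈ S, ∀ j, k < j → piCoeff J hJ ι j g = 0)
    {f : ι → blowUp J hJ} (hf : f ∈ Submodule.span (blowUp J hJ) (S : Set (ι → blowUp J hJ)))
    {n : ℕ} (hkn : k ≤ n) :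
    piCoeff J hJ ι n f ∈ jsmul (powSet J (n - k)) (jadic J (ι → A) k ⊓ N) := by
  obtain ⟨c, -, rfl⟩ := Submodule.mem_span_finset.mp hf
  rw [map_sum]
  refine sum_mem fun g hg => ?_
  rw [piCoeff_smul]
  refine sum_mem fun p hp => ?_
  rw [HasAntidiagonal.mem_antidiagonal] at hp
  by_cases hpk : p.2 ≤ k
  · have hg : piCoeff J hJ ι p.2 g ∈ jadic J (ι → A) p.2 ⊓ N :=
      ⟨piCoeff_mem_jadic J hJ p.2 g, hSN hg p.2⟩
    have hc : (c g : A[X]).coeff p.1 ∈ powSet J (n - p.2) := by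
      rw [← hp, Nat.add_sub_cancel]
      exact (c g).2 p.1
    exact jsmul_powSet_jadic_inf_mono J hJ hpk hkn N (Submodule.subset_span ⟨_, hc, _, hg, rfl⟩)
  · rw [hSk g hg p.2 (not_le.mp hpk), smul_zero]
    exact zero_mem _

theorem exists_jadic_pi_inf_le [Fintype ι] (hbl : IsNoetherianRing (blowUp J hJ))
    (N : Submodule A (ι → A)) :
    ∃ k, ∀ n, k ≤ n →
      jadic J (ι → A) n ⊓ N ≤ jsmul (powSet J (n - k)) (jadic J (ι → A) k ⊓ N) := by
  obtain ⟨S, hS⟩ := IsNoetherian.noetherian (reesSubmodule J hJ N)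
  let k := S.sup fun g => univ.sup fun i => (g i : A[X]).natDegree
  have hSk : ∀ g ∈ S, ∀ j, k < j → piCoeff J hJ ι j g = 0 := fun g hg j hj =>
    funext fun i => coeff_eq_zero_of_natDegree_lt <|
      (le_sup_of_le hg (le_sup (f := fun i => (g i : A[X]).natDegree) (mem_univ i))).trans_lt hj
  refine ⟨k, fun n hkn u hu => ?_⟩
  obtain ⟨f, hf, rfl⟩ := exists_mem_reesSubmodule_piCoeff_eq J hJ hu
  exact piCoeff_mem_jsmul_of_mem_span J hJ (hS ▸ Submodule.subset_span) hSk (hS ▸ hf) hkn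

end BlowUpModule

/-- **Artin–Rees.** Let `A` be a ring and `J` a two-sided ideal of `A` such that
the blow-up ring `Bl_J(A)` is left Noetherian. Then for every finitely generated left
`A`-module `M` and every submodule `N ⊆ M` there exists `k ≥ 0` such that
`J^n M ∩ N = J^{n-k}·(J^k M ∩ N)` for all `n ≥ k`. -/
theorem artinRees {A : Type*} [Ring A] (J : Ideal A)
    (hJtwoSided : ∀ x ∈ J, ∀ a : A, x * a ∈ J)
    (hbl : IsNoetherianRing (blowUp J hJtwoSided))
    (M : Type*) [AddCommGroup M] [Module A M] [Module.Finite A M] (N : Submodule A M) :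
    ∃ k : ℕ, ∀ n : ℕ, k ≤ n →
      jadic J M n ⊓ N =
        jsmul ((powSet J (n - k) : AddSubgroup A) : Set A) (jadic J M k ⊓ N) := by
  obtain ⟨r, π, hπ⟩ := Module.Finite.exists_fin' A M
  obtain ⟨k, hk⟩ := exists_jadic_pi_inf_le J hJtwoSided hbl (N.comap π)
  refine ⟨k, fun n hkn => le_antisymm ?_ ?_⟩
  · calc jadic J M n ⊓ N = (jadic J (Fin r → A) n ⊓ N.comap π).map π :=
          (map_jadic_inf_comap J hπ n N).symm
      _ ≤ (jsmul (powSet J (n - k)) (jadic J (Fin r → A) k ⊓ N.comap π)).map π :=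
          Submodule.map_mono (hk n hkn)
      _ = jsmul (powSet J (n - k)) (jadic J M k ⊓ N) := by
          rw [jsmul_map, map_jadic_inf_comap J hπ]
  · simpa [Nat.sub_add_cancel hkn] using jsmul_powSet_jadic_inf_le J hJtwoSided (n - k) k N
end

section
/- Let A = ⊕_{n≥0} A_n be an ℕ-graded ring and h ∈ A a central homogeneous element of positive degree. Let M = ⊕_{n∈ℤ} M_n be a ℤ-graded (A,A)-bimodule such that: (a) M is generated as a bimodule by finitely many homogeneous elements m_1, …, m_k; and (b) am − ma ∈ hM for all a ∈ A and m ∈ M. Then M is generated as a left A-module by m_1, …, m_k; in particular M is finitely generated as a left A-module (and, symmetrically, as a right A-module). -/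
/-!
Writing `a m b = (a b) m - a (b m - m b)` and using that commutators are divisible by the
central element `h`, every bimodule generator `a mᵢ b` lies in `N + h M`, where
`N = ∑ A mᵢ`; hence `M = N + h M`. Since the `mᵢ` and `h` are homogeneous, `N` is a graded
submodule and `M` vanishes below the least degree of the `mᵢ`. Comparing degree-`n`
components in `x = y + h z` gives `Mₙ ⊆ N + h Mₙ₋d`, and induction on the degree
(`d > 0`) yields `M = N`.
-/

open DirectSum MulOpposite Pointwise

theorem AddMonoidHom.apply_mem_of_closure_eq_top {A B : Type*} [AddGroup A] [AddGroup B]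
    (φ : A →+ B) {T : Set A} (hT : AddSubgroup.closure T = ⊤) {K : AddSubgroup B}
    (hφ : ∀ t ∈ T, φ t ∈ K) (a : A) : φ a ∈ K := by
  have hle : AddSubgroup.closure T ≤ K.comap φ := (AddSubgroup.closure_le _).2 hφ
  exact hle (hT.ge (AddSubgroup.mem_top a))

theorem AddMonoidHom.apply_apply_mem_closure_image2 {A B C : Type*} [AddGroup A] [AddGroup B]
    [AddCommGroup C] (f : A →+ B →+ C) {S : Set A} {T : Set B}
    (hS : AddSubgroup.closure S = ⊤) (hT : AddSubgroup.closure T = ⊤) (a : A) (b : B) :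
    f a b ∈ AddSubgroup.closure (Set.image2 (fun x y ↦ f x y) S T) := by
  set K := AddSubgroup.closure (Set.image2 (fun x y ↦ f x y) S T)
  have hSb : ∀ s ∈ S, f s b ∈ K := fun s hs ↦
    AddMonoidHom.apply_mem_of_closure_eq_top (K := K) (f s) hT
      (fun t ht ↦ AddSubgroup.subset_closure (Set.mem_image2_of_mem hs ht)) b
  exact (f.flip b).apply_mem_of_closure_eq_top hS hSb a

theorem Submodule.toAddSubgroup_span_eq_closure_smul {R M : Type*} [Ring R] [AddCommGroup M]
    [Module R M] {T : Set R} (hT : AddSubgroup.closure T = ⊤) (s : Set M) :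
    (span R s).toAddSubgroup = AddSubgroup.closure (T • s) := by
  refine le_antisymm (fun x hx ↦ ?_) ((AddSubgroup.closure_le _).2 ?_)
  · have hx' : x ∈ (span R s).toAddSubmonoid := hx
    rw [span_eq_closure] at hx'
    refine (AddSubmonoid.closure_le (S := (AddSubgroup.closure (T • s)).toAddSubmonoid)).2 ?_ hx'
    rintro _ ⟨r, -, y, hy, rfl⟩
    exact (smulAddHom R M).flip y |>.apply_mem_of_closure_eq_top hT
      (fun t ht ↦ AddSubgroup.subset_closure (Set.smul_mem_smul ht hy)) r
  · rintro _ ⟨t, -, y, hy, rfl⟩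
    exact smul_mem _ t (subset_span hy)

namespace DirectSum

section Graded

variable {ι M : Type*} [DecidableEq ι] [AddCommGroup M] (ℳ : ι → AddSubgroup M)
  [Decomposition ℳ]

theorem closure_isHomogeneousElem_eq_top :
    AddSubgroup.closure {x | SetLike.IsHomogeneousElem ℳ x} = ⊤ := by
  refine (AddSubgroup.eq_top_iff' _).2 fun x ↦ ?_
  induction x using Decomposition.inductionOn ℳ with
  | zero => exact zero_mem _
  | homogeneous x => exact AddSubgroup.subset_closure ⟨_, x.2⟩
  | add x y hx hy => exact add_mem hx hy

variable {ℳ} in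
theorem coe_decompose_mem_closure_inter {S : Set M} (hS : ∀ s ∈ S, SetLike.IsHomogeneousElem ℳ s)
    {x : M} (hx : x ∈ AddSubgroup.closure S) (n : ι) :
    (decompose ℳ x n : M) ∈ AddSubgroup.closure (S ∩ ℳ n) := by
  induction hx using AddSubgroup.closure_induction with
  | mem s hs =>
    obtain ⟨i, hi⟩ := hS s hs
    by_cases hin : i = n
    · subst hin
      rw [decompose_of_mem_same ℳ hi]
      exact AddSubgroup.subset_closure ⟨hs, hi⟩
    · rw [decompose_of_mem_ne ℳ hi hin]
      exact zero_mem _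
  | zero => simp
  | add x y _ _ hx hy => simpa using add_mem hx hy
  | neg x _ hx =>
    rw [decompose_neg, DFinsupp.neg_apply, AddSubgroup.coe_neg]
    exact neg_mem hx

theorem isHomogeneous_closure {S : Set M} (hS : ∀ s ∈ S, SetLike.IsHomogeneousElem ℳ s) :
    SetLike.IsHomogeneous ℳ (AddSubgroup.closure S) := fun n _ hx ↦
  AddSubgroup.closure_mono Set.inter_subset_left (coe_decompose_mem_closure_inter hS hx n)

theorem eq_bot_of_lt_of_closure_eq_top [Preorder ι] {S : Set M} {n₀ : ι}
    (hS : ∀ s ∈ S, ∃ i, n₀ ≤ i ∧ s ∈ ℳ i) (htop : AddSubgroup.closure S = ⊤) {n : ι}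
    (hn : n < n₀) : ℳ n = ⊥ := by
  have hS_n : S ∩ ℳ n ⊆ {0} := by
    rintro s ⟨hs, hsn⟩
    obtain ⟨i, hi, hsi⟩ := hS s hs
    rw [← decompose_of_mem_same ℳ hsn, decompose_of_mem_ne ℳ hsi (hn.trans_le hi).ne']
    rfl
  refine eq_bot_iff.2 fun x hx ↦ ?_
  have := coe_decompose_mem_closure_inter (fun s hs ↦ (hS s hs).imp fun _ ↦ And.right)
    (htop ▸ AddSubgroup.mem_top x) n
  rwa [decompose_of_mem_same ℳ hx, AddSubgroup.closure_eq_bot_iff.2 hS_n] at this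

theorem coe_decompose_map_of_shift [AddGroup ι] {f : M →+ M} {d : ι}
    (hf : ∀ i, ∀ x ∈ ℳ i, f x ∈ ℳ (i + d)) (x : M) (n : ι) :
    (decompose ℳ (f x) n : M) = f (decompose ℳ x (n - d)) := by
  induction x using Decomposition.inductionOn ℳ with
  | zero => simp
  | @homogeneous i x =>
    by_cases hin : i + d = n
    · subst hin
      rw [decompose_of_mem_same ℳ (hf i x x.2), add_sub_cancel_right,
        decompose_of_mem_same ℳ x.2]
    · rw [decompose_of_mem_ne ℳ (hf i x x.2) hin,
        decompose_of_mem_ne ℳ x.2 (fun h ↦ hin (by rw [h, sub_add_cancel])), map_zero]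
  | add x y hx hy => simp [hx, hy]

end Graded

theorem eq_top_of_sup_range_eq_top {M : Type*} [AddCommGroup M] (ℳ : ℤ → AddSubgroup M)
    [Decomposition ℳ] {n₀ : ℤ} (hbdd : ∀ n < n₀, ℳ n = ⊥) {f : M →+ M} {d : ℤ} (hd : 0 < d)
    (hf : ∀ n, ∀ x ∈ ℳ n, f x ∈ ℳ (n + d)) {N : AddSubgroup M}
    (hN : SetLike.IsHomogeneous ℳ N) (hfN : ∀ x ∈ N, f x ∈ N) (hsup : N ⊔ f.range = ⊤) :
    N = ⊤ := by
  have hle : ∀ t : ℕ, ∀ n < n₀ + t, ℳ n ≤ N := by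
    intro t
    induction t with
    | zero => intro n hn; simp [hbdd n (by simpa using hn)]
    | succ t ih =>
      intro n hn x hx
      obtain ⟨y, hy, _, ⟨z, rfl⟩, rfl⟩ := AddSubgroup.mem_sup.1 (hsup ▸ AddSubgroup.mem_top x)
      rw [← decompose_of_mem_same ℳ hx, decompose_add, add_apply, AddSubgroup.coe_add,
        coe_decompose_map_of_shift ℳ hf]
      exact add_mem (hN n hy) (hfN _ (ih (n - d) (by omega) (decompose ℳ z (n - d)).2))
  refine (AddSubgroup.eq_top_iff' N).2 fun x ↦ ?_
  induction x using Decomposition.inductionOn ℳ with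
  | zero => exact zero_mem N
  | @homogeneous i x => exact hle ((i - n₀).toNat + 1) i (by omega) x.2
  | add x y hx hy => exact add_mem hx hy

end DirectSum

section Bimodule

variable {A M ι : Type*} [Ring A] [AddCommGroup M] [Module A M] [Module Aᵐᵒᵖ M]

theorem closure_smul_op_smul_eq_top {T : Set A} (hT : AddSubgroup.closure T = ⊤) (m : ι → M)
    (hgen : AddSubgroup.closure
      {z : M | ∃ (i : ι) (a b : A), z = a • (op b • m i)} = ⊤) :
    AddSubgroup.closure {z : M | ∃ i, ∃ a ∈ T, ∃ b ∈ T, z = a • (op b • m i)} = ⊤ := by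
  refine eq_top_iff.2 (hgen ▸ (AddSubgroup.closure_le _).2 ?_)
  rintro _ ⟨i, a, b, rfl⟩
  let f : A →+ A →+ M := (smulAddHom A M).compl₂ <|
    ((smulAddHom Aᵐᵒᵖ M).flip (m i)).comp opAddEquiv.toAddMonoidHom
  refine AddSubgroup.closure_mono ?_ (f.apply_apply_mem_closure_image2 hT hT a b)
  rintro _ ⟨a, ha, b, hb, rfl⟩
  exact ⟨i, a, ha, b, hb, rfl⟩

theorem span_sup_range_smul_eq_top {h : A} (hcen : ∀ a : A, h * a = a * h)
    (hcomm : ∀ (a : A) (x : M), ∃ z : M, a • x - op a • x = h • z) (m : ι → M)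
    (hgen : AddSubgroup.closure
      {z : M | ∃ (i : ι) (a b : A), z = a • (op b • m i)} = ⊤) :
    (Submodule.span A (Set.range m)).toAddSubgroup ⊔
      (DistribSMul.toAddMonoidHom M h).range = ⊤ := by
  refine eq_top_iff.2 (hgen ▸ (AddSubgroup.closure_le _).2 ?_)
  rintro _ ⟨i, a, b, rfl⟩
  obtain ⟨z, hz⟩ := hcomm b (m i)
  have hdecomp : a • (op b • m i) = (a * b) • m i + h • (-(a • z)) :=
    calc a • (op b • m i)
        = (a * b) • m i - a • (b • m i - op b • m i) := by
          rw [smul_sub, mul_smul]; abel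
      _ = (a * b) • m i + h • (-(a • z)) := by
          rw [hz, smul_smul, ← hcen, mul_smul h, smul_neg, sub_eq_add_neg]
  rw [hdecomp]
  exact AddSubgroup.add_mem_sup (Submodule.smul_mem _ _ (Submodule.subset_span ⟨i, rfl⟩))
    ⟨_, rfl⟩

end Bimodule

theorem bimodule_finitelyGenerated_oneSided_general {A : Type*} [Ring A]
    (𝒜 : ℕ → AddSubgroup A) (hAgr : DirectSum.IsInternal 𝒜) (hone : (1 : A) ∈ 𝒜 0)
    (h : A) (hcen : ∀ a : A, h * a = a * h)
    (d : ℕ) (hd : 0 < d) (hhd : h ∈ 𝒜 d)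
    {M : Type*} [AddCommGroup M] [Module A M] [Module Aᵐᵒᵖ M]
    (ℳ : ℤ → AddSubgroup M) (hMgr : DirectSum.IsInternal ℳ)
    (hsmul : ∀ (i : ℕ) (n : ℤ) (p : ℕ), ∀ a ∈ 𝒜 i, ∀ x ∈ ℳ n, ∀ b ∈ 𝒜 p,
      a • (MulOpposite.op b • x) ∈ ℳ ((i : ℤ) + n + (p : ℤ)))
    (k : ℕ) (m : Fin k → M)
    (hhom : ∀ i : Fin k, ∃ n : ℤ, m i ∈ ℳ n)
    (hgen : AddSubgroup.closure
        {z : M | ∃ (i : Fin k) (a b : A), z = a • (MulOpposite.op b • m i)} = ⊤)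
    (hcomm : ∀ (a : A) (x : M), ∃ z : M, a • x - MulOpposite.op a • x = h • z) :
    Submodule.span A (Set.range m) = ⊤ := by
  let := hAgr.chooseDecomposition
  let := hMgr.chooseDecomposition
  have hsmul_left (j : ℕ) (n : ℤ) (a : A) (ha : a ∈ 𝒜 j) (x : M) (hx : x ∈ ℳ n) :
      a • x ∈ ℳ (j + n) := by
    simpa using hsmul j n 0 a ha x hx 1 hone
  choose deg hdeg using hhom
  obtain ⟨n₀, hn₀⟩ := (Set.finite_range deg).bddBelow
  have hbdd (n : ℤ) (hn : n < n₀) : ℳ n = ⊥ := by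
    refine eq_bot_of_lt_of_closure_eq_top ℳ ?_
      (closure_smul_op_smul_eq_top (closure_isHomogeneousElem_eq_top 𝒜) m hgen) hn
    rintro _ ⟨i, a, ⟨j, ha⟩, b, ⟨p, hb⟩, rfl⟩
    exact ⟨j + deg i + p, by have := hn₀ ⟨i, rfl⟩; omega, hsmul j _ p a ha _ (hdeg i) b hb⟩
  have hN : SetLike.IsHomogeneous ℳ (Submodule.span A (Set.range m)).toAddSubgroup := by
    rw [Submodule.toAddSubgroup_span_eq_closure_smul (closure_isHomogeneousElem_eq_top 𝒜)]
    refine isHomogeneous_closure ℳ ?_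
    rintro _ ⟨a, ⟨j, ha⟩, _, ⟨i, rfl⟩, rfl⟩
    exact ⟨_, hsmul_left j (deg i) a ha (m i) (hdeg i)⟩
  have hdeg_h (n : ℤ) (x : M) (hx : x ∈ ℳ n) : h • x ∈ ℳ (n + d) := by
    rw [add_comm]
    exact hsmul_left d n h hhd x hx
  rw [← Submodule.toAddSubgroup_eq_top]
  exact eq_top_of_sup_range_eq_top ℳ hbdd (Int.natCast_pos.2 hd) hdeg_h hN
    (fun x hx ↦ Submodule.smul_mem _ h hx) (span_sup_range_smul_eq_top hcen hcomm m hgen)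

/-- Let `A = ⊕_{n≥0} 𝒜 n` be an `ℕ`-graded ring and `h ∈ A` a central
homogeneous element of positive degree. Let `M = ⊕_{n∈ℤ} ℳ n` be a `ℤ`-graded
`(A,A)`-bimodule generated as a bimodule by finitely many homogeneous elements `m 0, …,
m (k-1)` and such that `am - ma ∈ hM` for all `a ∈ A`, `m ∈ M`. Then `M` is generated as a
left `A`-module by `m 0, …, m (k-1)`; in particular `M` is finitely generated as a left
`A`-module. -/
theorem bimodule_finitelyGenerated_oneSided {A : Type*} [Ring A]
    (𝒜 : ℕ → AddSubgroup A) (hAgr : DirectSum.IsInternal 𝒜) (hone : (1 : A) ∈ 𝒜 0)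
    (hAmul : ∀ i j : ℕ, ∀ x ∈ 𝒜 i, ∀ y ∈ 𝒜 j, x * y ∈ 𝒜 (i + j))
    (h : A) (hcen : ∀ a : A, h * a = a * h)
    (d : ℕ) (hd : 0 < d) (hhd : h ∈ 𝒜 d)
    {M : Type*} [AddCommGroup M] [Module A M] [Module Aᵐᵒᵖ M] [SMulCommClass A Aᵐᵒᵖ M]
    (ℳ : ℤ → AddSubgroup M) (hMgr : DirectSum.IsInternal ℳ)
    (hsmul : ∀ (i : ℕ) (n : ℤ) (p : ℕ), ∀ a ∈ 𝒜 i, ∀ x ∈ ℳ n, ∀ b ∈ 𝒜 p,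
      a • (MulOpposite.op b • x) ∈ ℳ ((i : ℤ) + n + (p : ℤ)))
    (k : ℕ) (m : Fin k → M)
    (hhom : ∀ i : Fin k, ∃ n : ℤ, m i ∈ ℳ n)
    (hgen : AddSubgroup.closure
        {z : M | ∃ (i : Fin k) (a b : A), z = a • (MulOpposite.op b • m i)} = ⊤)
    (hcomm : ∀ (a : A) (x : M), ∃ z : M, a • x - MulOpposite.op a • x = h • z) :
    Submodule.span A (Set.range m) = ⊤ :=
  bimodule_finitelyGenerated_oneSided_general 𝒜 hAgr hone h hcen d hd hhd ℳ hMgr hsmul k m hhom hgen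
    hcomm
end
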